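/- arXiv:2009.12022 — 4 statements merged into one kernel-verified Lean document; each statement's English description precedes it below -/
import Mathlib

section
/- Let (V, E, w) be a weighted graph with vertex weights w_i > 0 and edge weights w(i,j) satisfying monotonicity: max(w_i, w_j) ≤ w(i,j) for every edge (i,j). Fix θ ∈ [1/2, 1], let E_θ = {(i,j) ∈ E : w(i,j) ≤ θ·(w_i + w_j)}, let M be any maximal matching in (V, E_θ), and let M* be any matching in (V, E). Define the cost of a matching N as w(N) = Σ_{(i,j)∈N} w(i,j) + Σ_{i unmatched in N} w_i. Then w(M) ≤ max(1 + θ, 1/θ)·w(M*). In particular, for θ = (√5−1)/2, the maximal matching in E_θ is (√5+1)/2-competitive. -/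
open Finset in
open scoped Classical in
/-- Sum over vertices matched by a matching `N` equals sum over edges of endpoint sums. -/
private lemma matched_sum_aux {V : Type*} [Fintype V] [DecidableEq V]
    (N : Finset (Sym2 V))
    (hN : ∀ e ∈ N, ∀ f ∈ N, e ≠ f → ∀ v : V, ¬(v ∈ e ∧ v ∈ f))
    (g : V → ℝ) :
    ∑ e ∈ N, ∑ i ∈ univ.filter (· ∈ e), g i
      = ∑ i ∈ univ.filter (fun i => ¬ ∀ e ∈ N, i ∉ e), g i := by
  rw [← Finset.sum_biUnion]
  · congr 1
    ext i
    simp only [mem_biUnion, mem_filter, mem_univ, true_and]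
    push_neg
    rfl
  · intro e he f hf hef
    simp only [Finset.disjoint_left, mem_filter, mem_univ, true_and]
    intro v hv hv'
    exact hN e he f hf hef v ⟨hv, hv'⟩

open Finset in
open scoped Classical in
private lemma filter_mem_pair {V : Type*} [Fintype V] [DecidableEq V] {i j : V}
    (g : V → ℝ) (h : i ≠ j) :
    ∑ v ∈ univ.filter (· ∈ s(i, j)), g v = g i + g j := by
  have : univ.filter (· ∈ s(i, j)) = {i, j} := by
    ext v; simp [Sym2.mem_iff]
  rw [this, Finset.sum_pair h]

open Finset in
open scoped Classical in
/-- Threshold competitiveness: a maximal matching in the thresholded edge set `Eθ` has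
cost at most `max (1+θ) (1/θ)` times the cost of any matching. -/
theorem stmt_14 {V : Type*} [Fintype V] [DecidableEq V]
    (wv : V → ℝ) (hwv : ∀ i, 0 < wv i)
    (E : Finset (Sym2 V)) (we : Sym2 V → ℝ)
    (hsimple : ∀ e ∈ E, ¬ e.IsDiag)
    (hmono : ∀ e ∈ E, ∀ i ∈ e, wv i ≤ we e)
    (θ : ℝ) (hθ₁ : 1 / 2 ≤ θ) (hθ₂ : θ ≤ 1)
    (Eθ : Finset (Sym2 V))
    (hEθ : ∀ i j : V, s(i, j) ∈ Eθ ↔ s(i, j) ∈ E ∧ we s(i, j) ≤ θ * (wv i + wv j))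
    (M Mstar : Finset (Sym2 V))
    -- `M` is a matching in `(V, Eθ)` …
    (hMsub : M ⊆ Eθ)
    (hMmatch : ∀ e ∈ M, ∀ f ∈ M, e ≠ f → ∀ v : V, ¬(v ∈ e ∧ v ∈ f))
    -- … which is maximal: any edge of `Eθ` disjoint from `M` already lies in `M`
    (hMmax : ∀ e ∈ Eθ, (∀ f ∈ M, ∀ v : V, ¬(v ∈ e ∧ v ∈ f)) → e ∈ M)
    -- `Mstar` is any matching in `(V, E)`
    (hMstarsub : Mstar ⊆ E)
    (hMstarmatch : ∀ e ∈ Mstar, ∀ f ∈ Mstar, e ≠ f → ∀ v : V, ¬(v ∈ e ∧ v ∈ f)) :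
    (∑ e ∈ M, we e + ∑ i ∈ univ.filter (fun i => ∀ e ∈ M, i ∉ e), wv i)
      ≤ max (1 + θ) (1 / θ) *
        (∑ e ∈ Mstar, we e + ∑ i ∈ univ.filter (fun i => ∀ e ∈ Mstar, i ∉ e), wv i) := by
  have hθ0 : (0:ℝ) < θ := by linarith
  set ρ := max (1 + θ) (1/θ) with hρdef
  have hρ1 : (1:ℝ) ≤ ρ := le_trans (by linarith) (le_max_left _ _)
  have hρθ : 1/θ ≤ ρ := le_max_right _ _
  have hρ1θ : 1 + θ ≤ ρ := le_max_left _ _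
  set x : V → ℝ := fun i => if ∀ e ∈ M, i ∉ e then wv i else θ * wv i with hxdef
  have hx_le : ∀ i, x i ≤ wv i := by
    intro i
    simp only [hxdef]
    split
    · exact le_refl _
    · nlinarith [hwv i]
  -- Step A : cost of M ≤ ∑ x
  have hA : ∑ e ∈ M, we e + ∑ i ∈ univ.filter (fun i => ∀ e ∈ M, i ∉ e), wv i
      ≤ ∑ i, x i := by
    rw [← Finset.sum_filter_add_sum_filter_not univ (fun i => ∀ e ∈ M, i ∉ e) x]
    have h1 : ∑ i ∈ univ.filter (fun i => ∀ e ∈ M, i ∉ e), x i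
        = ∑ i ∈ univ.filter (fun i => ∀ e ∈ M, i ∉ e), wv i := by
      apply Finset.sum_congr rfl
      intro i hi
      rw [mem_filter] at hi
      simp only [hxdef, if_pos hi.2]
    have h2 : ∑ e ∈ M, we e ≤ ∑ i ∈ univ.filter (fun i => ¬ ∀ e ∈ M, i ∉ e), x i := by
      rw [← matched_sum_aux M hMmatch x]
      apply Finset.sum_le_sum
      intro e he
      induction e using Sym2.ind with
      | _ i j =>
        have heθ : s(i, j) ∈ Eθ := hMsub he
        have heE : s(i, j) ∈ E ∧ we s(i, j) ≤ θ * (wv i + wv j) := (hEθ i j).mp heθ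
        have hij : i ≠ j := by
          intro h
          exact hsimple _ heE.1 (by simp [h])
        rw [filter_mem_pair x hij]
        have hxi : x i = θ * wv i := by
          simp only [hxdef]
          rw [if_neg]
          push_neg
          exact ⟨s(i, j), he, by simp⟩
        have hxj : x j = θ * wv j := by
          simp only [hxdef]
          rw [if_neg]
          push_neg
          exact ⟨s(i, j), he, by simp⟩
        rw [hxi, hxj]
        linarith [heE.2]
    linarith
  -- Step B : ∑ x ≤ ρ * cost of Mstar
  have hB : ∑ i, x i
      ≤ ρ * (∑ e ∈ Mstar, we e + ∑ i ∈ univ.filter (fun i => ∀ e ∈ Mstar, i ∉ e), wv i) := by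
    rw [← Finset.sum_filter_add_sum_filter_not univ (fun i => ∀ e ∈ Mstar, i ∉ e) x,
      mul_add, Finset.mul_sum, Finset.mul_sum]
    have h1 : ∑ i ∈ univ.filter (fun i => ∀ e ∈ Mstar, i ∉ e), x i
        ≤ ∑ i ∈ univ.filter (fun i => ∀ e ∈ Mstar, i ∉ e), ρ * wv i := by
      apply Finset.sum_le_sum
      intro i _
      have := hx_le i
      nlinarith [hwv i]
    have h2 : ∑ i ∈ univ.filter (fun i => ¬ ∀ e ∈ Mstar, i ∉ e), x i
        ≤ ∑ e ∈ Mstar, ρ * we e := by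
      rw [← matched_sum_aux Mstar hMstarmatch x]
      apply Finset.sum_le_sum
      intro e he
      induction e using Sym2.ind with
      | _ i j =>
        have heE : s(i, j) ∈ E := hMstarsub he
        have hij : i ≠ j := by
          intro h
          exact hsimple _ heE (by simp [h])
        rw [filter_mem_pair x hij]
        have hwei : wv i ≤ we s(i, j) := hmono _ heE i (by simp)
        have hwej : wv j ≤ we s(i, j) := hmono _ heE j (by simp)
        by_cases hi : ∀ f ∈ M, i ∉ f
        · by_cases hj : ∀ f ∈ M, j ∉ f
          · -- both unmatched by M, so s(i,j) ∉ Eθ by maximality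
            have hnotθ : s(i, j) ∉ Eθ := by
              intro hmem
              have hM : s(i, j) ∈ M := by
                apply hMmax _ hmem
                intro f hf v hv
                rcases Sym2.mem_iff.mp hv.1 with rfl | rfl
                · exact hi f hf hv.2
                · exact hj f hf hv.2
              exact hi _ hM (by simp)
            have hgt : θ * (wv i + wv j) < we s(i, j) := by
              by_contra h
              exact hnotθ ((hEθ i j).mpr ⟨heE, le_of_not_gt h⟩)
            have hxi : x i = wv i := by simp only [hxdef]; rw [if_pos hi]
            have hxj : x j = wv j := by simp only [hxdef]; rw [if_pos hj]
            rw [hxi, hxj]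
            have hwe0 : 0 < we s(i, j) := lt_of_lt_of_le (hwv i) hwei
            have : (1/θ) * we s(i, j) ≤ ρ * we s(i, j) :=
              mul_le_mul_of_nonneg_right hρθ (le_of_lt hwe0)
            have h2 : wv i + wv j ≤ (1/θ) * we s(i, j) := by
              rw [div_mul_eq_mul_div, le_div_iff₀ hθ0]
              nlinarith
            linarith
          · -- j matched by M
            have hxj : x j = θ * wv j := by simp only [hxdef]; rw [if_neg hj]
            have hxi : x i ≤ wv i := hx_le i
            rw [hxj]
            have hwe0 : (0:ℝ) ≤ we s(i, j) := le_of_lt (lt_of_lt_of_le (hwv i) hwei)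
            nlinarith [hwv j]
        · -- i matched by M
          have hxi : x i = θ * wv i := by simp only [hxdef]; rw [if_neg hi]
          have hxj : x j ≤ wv j := hx_le j
          rw [hxi]
          have hwe0 : (0:ℝ) ≤ we s(i, j) := le_of_lt (lt_of_lt_of_le (hwv i) hwei)
          nlinarith [hwv i]
    linarith
  linarith
end

section
/- (Length-2 path base case) Let θ = 2/3, let w_a, w_b, w_c > 0 be reals with θ_ab := w(a,b)/(w_a + w_b) ≤ θ, and assume monotonicity w(a,b) ≥ max(w_a, w_b) and w(b,c) ≥ max(w_b, w_c). Then (w(a,b) + w_c) / (w_a + w(b,c)) ≤ 3/2. -/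
/-- Length-2 path base case of the threshold analysis with `θ = 2/3`. -/
theorem stmt_16 (wa wb wc wab wbc : ℝ)
    (hwa : 0 < wa) (hwb : 0 < wb) (hwc : 0 < wc)
    (hthr : wab ≤ (2 / 3) * (wa + wb))
    (hab : max wa wb ≤ wab) (hbc : max wb wc ≤ wbc) :
    (wab + wc) / (wa + wbc) ≤ 3 / 2 := by
  have h1 : wb ≤ wab := le_trans (le_max_right _ _) hab
  have h2 : wb ≤ wbc := le_trans (le_max_left _ _) hbc
  have h3 : wc ≤ wbc := le_trans (le_max_right _ _) hbc
  have hd : 0 < wa + wbc := by linarith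
  rw [div_le_div_iff₀ hd (by norm_num : (0:ℝ) < 2)]
  linarith
end

section
/- (Induction-step inequality) Let 1/2 ≤ θ_01, θ_12 ≤ 2/3 and w_0, w_1, w_2 > 0 with w(0,1) = θ_01(w_0 + w_1) ≥ max(w_0, w_1) and w(1,2) = θ_12(w_1 + w_2) ≥ max(w_1, w_2). Then (w_0 + θ_12·w_1 + (θ_12 − 1)·w_2) / (θ_01·(w_0 + w_1)) ≤ 3/2. -/
/-- Induction-step inequality in the threshold analysis. -/
theorem stmt_17 (θ01 θ12 w0 w1 w2 : ℝ)
    (hθ01 : 1 / 2 ≤ θ01) (hθ01' : θ01 ≤ 2 / 3)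
    (hθ12 : 1 / 2 ≤ θ12) (hθ12' : θ12 ≤ 2 / 3)
    (hw0 : 0 < w0) (hw1 : 0 < w1) (hw2 : 0 < w2)
    (h01 : max w0 w1 ≤ θ01 * (w0 + w1))
    (h12 : max w1 w2 ≤ θ12 * (w1 + w2)) :
    (w0 + θ12 * w1 + (θ12 - 1) * w2) / (θ01 * (w0 + w1)) ≤ 3 / 2 := by
  have ha : w0 ≤ θ01 * (w0 + w1) := le_trans (le_max_left _ _) h01
  have hb : w1 ≤ θ01 * (w0 + w1) := le_trans (le_max_right _ _) h01
  have hc : w1 ≤ θ12 * (w1 + w2) := le_trans (le_max_left _ _) h12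
  have hd : 0 < θ01 * (w0 + w1) := lt_of_lt_of_le hw0 ha
  rw [div_le_iff₀ hd]
  -- key: (1-θ12)*w2 ≥ (1-θ12)^2/θ12 * w1, so θ12*w1-(1-θ12)*w2 ≤ (2-1/θ12)*w1 ≤ w1/2
  have hθpos : (0:ℝ) < θ12 := by linarith
  have key : θ12 * w1 + (θ12 - 1) * w2 ≤ w1 / 2 := by
    nlinarith [mul_pos hw2 (by linarith : (0:ℝ) < 1 - θ12), sq_nonneg (θ12 - 1/2),
      mul_nonneg (le_of_lt hw1) (by linarith : (0:ℝ) ≤ 2/3 - θ12)]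
  rcases le_total w0 w1 with h | h
  · nlinarith
  · nlinarith
end

section
/- (Type-2 length-3 path, case 2 inequality) Let 1/2 ≤ θ_bc ≤ θ_ab ≤ 2/3 and 1/2 ≤ θ_cd ≤ 2/3, with positive reals w_a, w_b, w_c, w_d satisfying θ_ab(w_a + w_b) ≥ max(w_a, w_b), θ_bc(w_b + w_c) ≥ max(w_b, w_c), θ_cd(w_c + w_d) ≥ max(w_c, w_d). Then (w_a + θ_bc(w_b + w_c) + w_d) / (θ_ab(w_a + w_b) + θ_cd(w_c + w_d)) ≤ 3/2. -/
/-- Type-2 length-3 path, case-2 inequality in the threshold analysis. -/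
theorem stmt_18 (θab θbc θcd wa wb wc wd : ℝ)
    (hθbc : 1 / 2 ≤ θbc) (hbcab : θbc ≤ θab) (hθab : θab ≤ 2 / 3)
    (hθcd : 1 / 2 ≤ θcd) (hθcd' : θcd ≤ 2 / 3)
    (hwa : 0 < wa) (hwb : 0 < wb) (hwc : 0 < wc) (hwd : 0 < wd)
    (hab : max wa wb ≤ θab * (wa + wb))
    (hbc : max wb wc ≤ θbc * (wb + wc))
    (hcd : max wc wd ≤ θcd * (wc + wd)) :
    (wa + θbc * (wb + wc) + wd) / (θab * (wa + wb) + θcd * (wc + wd)) ≤ 3 / 2 := by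
  have h1 : wa ≤ θab * (wa + wb) := le_trans (le_max_left _ _) hab
  have h2 : wb ≤ θab * (wa + wb) := le_trans (le_max_right _ _) hab
  have h3 : wb ≤ θbc * (wb + wc) := le_trans (le_max_left _ _) hbc
  have h4 : wc ≤ θbc * (wb + wc) := le_trans (le_max_right _ _) hbc
  have h5 : wc ≤ θcd * (wc + wd) := le_trans (le_max_left _ _) hcd
  have h6 : wd ≤ θcd * (wc + wd) := le_trans (le_max_right _ _) hcd
  have hden : 0 < θab * (wa + wb) + θcd * (wc + wd) := by nlinarith
  rw [div_le_iff₀ hden]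
  nlinarith [mul_pos hwa hwc, mul_pos hwb hwd, mul_pos hwa hwd, mul_pos hwb hwc,
    mul_nonneg (sub_nonneg.2 hbcab) hwa.le, mul_nonneg (sub_nonneg.2 hbcab) hwb.le,
    mul_nonneg (sub_nonneg.2 hθbc) hwc.le, mul_nonneg (sub_nonneg.2 hθcd) hwd.le]
end
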